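/- Let e ∈ 𝓡 have numerator N and denominator D in lowest terms (both monic). Assume that b − a ∉ ℕ for every root a of N and every root b of D. Then (multiset of roots of N, ∅, multiset of roots of D) is a standard factorization of e, and it is the only one: every standard factorization (X, P, W) of e has P empty, X equal to the multiset of roots of N, and W equal to the multiset of roots of D. -/

import Mathlib

/-!
Since `0 ∈ Δ_z^y` whenever `z - y` is a positive integer, conditions (ii)–(v) of a standard
factorization `(X, P, W)` say in particular that no linear factor of `X + P.1` equals one of
`P.2 + W`. The product defining it is then already in lowest terms, so the roots of the numerator
and of the denominator of `e` are `X + P.1` and `P.2 + W`. A pair `(y, z) ∈ P` would thus give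
a root `y` of the numerator and a root `z` of the denominator with `z - y ∈ ℕ`.
-/

open Polynomial

/-- The set `Δ_b^a ⊆ ℂ`: equal to `{k ∈ ℕ : k < b − a}` if `b − a ∈ ℕ`,
and to `ℕ` (viewed inside `ℂ`) otherwise. -/
def DeltaSet (a b : ℂ) : Set ℂ :=
  {x | ∃ k : ℕ, x = (k : ℂ) ∧ ∀ n : ℕ, (n : ℂ) = b - a → k < n}

/-- `b − a ∈ ℕ`. -/
def natDiff (a b : ℂ) : Prop := ∃ n : ℕ, (n : ℂ) = b - a

/-- The linear rational function `u − a`. -/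
noncomputable def lin (a : ℂ) : RatFunc ℂ :=
  algebraMap (Polynomial ℂ) (RatFunc ℂ) (X - C a)

/-- The rational function `∏_{x∈X}(u−x) · ∏_{(y,z)∈P}(u−y)/(u−z) · ∏_{w∈W}(u−w)⁻¹`. -/
noncomputable def stdProd (X : Multiset ℂ) (P : Multiset (ℂ × ℂ)) (W : Multiset ℂ) :
    RatFunc ℂ :=
  (X.map lin).prod * (P.map fun p => lin p.1 / lin p.2).prod *
    (W.map fun w => (lin w)⁻¹).prod

/-- `(X, P, W)` is a standard factorization of `e ∈ 𝓡`. -/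
def IsStdFact (e : RatFunc ℂ) (X : Multiset ℂ) (P : Multiset (ℂ × ℂ)) (W : Multiset ℂ) :
    Prop :=
  e = stdProd X P W ∧
  (∀ p ∈ P, ∃ n : ℕ, 0 < n ∧ (n : ℂ) = p.2 - p.1) ∧
  (∀ p ∈ P, ∀ q ∈ P,
    ¬(p.2 - q.1 ∈ DeltaSet p.1 p.2 ∧ p.2 - q.1 ∈ DeltaSet q.1 q.2)) ∧
  (∀ x ∈ X, ∀ p ∈ P, p.2 - x ∉ DeltaSet p.1 p.2) ∧
  (∀ x ∈ X, ∀ w ∈ W, ¬ natDiff x w) ∧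
  (∀ w ∈ W, ∀ p ∈ P, w - p.1 ∉ DeltaSet p.1 p.2)

theorem IsCoprime.multiset_prod_left {R : Type*} [CommSemiring R] {s : Multiset R} {y : R}
    (h : ∀ x ∈ s, IsCoprime x y) : IsCoprime s.prod y :=
  Multiset.prod_induction (IsCoprime · y) s (fun _ _ => IsCoprime.mul_left) isCoprime_one_left h

theorem IsCoprime.multiset_prod_right {R : Type*} [CommSemiring R] {x : R} {s : Multiset R}
    (h : ∀ y ∈ s, IsCoprime x y) : IsCoprime x s.prod :=
  (IsCoprime.multiset_prod_left fun y hy => (h y hy).symm).symm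

namespace Polynomial

theorem isCoprime_prod_X_sub_C_of_disjoint {K : Type*} [Field K] {s t : Multiset K}
    (hst : Disjoint s t) :
    IsCoprime (s.map (X - C ·)).prod (t.map (X - C ·)).prod := by
  refine IsCoprime.multiset_prod_left fun _ ha => IsCoprime.multiset_prod_right fun _ hb => ?_
  obtain ⟨a, has, rfl⟩ := Multiset.mem_map.mp ha
  obtain ⟨b, hbt, rfl⟩ := Multiset.mem_map.mp hb
  exact isCoprime_X_sub_C_of_isUnit_sub
    (sub_ne_zero.mpr (Multiset.disjoint_iff_ne.mp hst a has b hbt)).isUnit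

end Polynomial

namespace RatFunc

theorem num_denom_eq_of_isCoprime {K : Type*} [Field K] {x : RatFunc K} {p q : K[X]}
    (hpq : IsCoprime p q) (hq : q.Monic) (hx : x = algebraMap _ _ p / algebraMap _ _ q) :
    x.num = p ∧ x.denom = q := by
  have key : x.num * q = p * x.denom := (num_mul_eq_mul_denom_iff hq.ne_zero).mpr hx
  have hdenom : x.denom = q := by
    refine eq_of_monic_of_associated x.monic_denom hq (associated_of_dvd_dvd ?_ ?_)
    · exact x.isCoprime_num_denom.symm.dvd_of_dvd_mul_left ⟨p, by linear_combination key⟩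
    · exact hpq.symm.dvd_of_dvd_mul_left ⟨x.num, by linear_combination -key⟩
  refine ⟨mul_right_cancel₀ hq.ne_zero ?_, hdenom⟩
  rw [key, hdenom]

end RatFunc

theorem prod_map_lin (s : Multiset ℂ) :
    (s.map lin).prod = algebraMap ℂ[X] (RatFunc ℂ) (s.map (X - C ·)).prod := by
  rw [map_multiset_prod, Multiset.map_map]
  rfl

theorem stdProd_eq_div (X : Multiset ℂ) (P : Multiset (ℂ × ℂ)) (W : Multiset ℂ) :
    stdProd X P W =
      algebraMap ℂ[X] (RatFunc ℂ) ((X + P.map Prod.fst).map (Polynomial.X - C ·)).prod /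
        algebraMap ℂ[X] (RatFunc ℂ) ((P.map Prod.snd + W).map (Polynomial.X - C ·)).prod := by
  simp only [Multiset.map_add, Multiset.prod_add, map_mul, ← prod_map_lin]
  simp only [stdProd, Multiset.map_map, Multiset.prod_map_div, Multiset.prod_map_inv,
    Function.comp_def]
  ring

theorem zero_mem_DeltaSet {y z : ℂ} (h : ∃ n : ℕ, 0 < n ∧ (n : ℂ) = z - y) :
    (0 : ℂ) ∈ DeltaSet y z := by
  obtain ⟨n, hn, hnz⟩ := h
  refine ⟨0, Nat.cast_zero.symm, fun m hm => ?_⟩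
  rwa [Nat.cast_injective (hm.trans hnz.symm)]

namespace IsStdFact

variable {e : RatFunc ℂ} {X : Multiset ℂ} {P : Multiset (ℂ × ℂ)} {W : Multiset ℂ}

theorem disjoint (h : IsStdFact e X P W) :
    Disjoint (X + P.map Prod.fst) (P.map Prod.snd + W) := by
  obtain ⟨-, hgap, hPP, hXP, hXW, hWP⟩ := h
  have h0 (p) (hp : p ∈ P) : (0 : ℂ) ∈ DeltaSet p.1 p.2 := zero_mem_DeltaSet (hgap p hp)
  refine Multiset.disjoint_left.mpr fun {a} ha hb => ?_
  simp only [Multiset.mem_add, Multiset.mem_map] at ha hb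
  rcases ha with hx | ⟨q, hq, rfl⟩ <;> rcases hb with ⟨p, hp, hpa⟩ | hw
  · exact hXP a hx p hp (by rw [sub_eq_zero.mpr hpa]; exact h0 p hp)
  · exact hXW a hx a hw ⟨0, by simp⟩
  · rw [← sub_eq_zero] at hpa
    exact hPP p hp q hq ⟨hpa ▸ h0 p hp, hpa ▸ h0 q hq⟩
  · exact hWP q.1 hw q hq (by rw [sub_self]; exact h0 q hq)

theorem roots_num_denom (h : IsStdFact e X P W) :
    e.num.roots = X + P.map Prod.fst ∧ e.denom.roots = P.map Prod.snd + W := by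
  obtain ⟨hnum, hdenom⟩ := RatFunc.num_denom_eq_of_isCoprime
    (Polynomial.isCoprime_prod_X_sub_C_of_disjoint h.disjoint)
    (monic_multiset_prod_of_monic _ _ fun a _ => monic_X_sub_C a)
    (h.1.trans (stdProd_eq_div X P W))
  rw [hnum, hdenom, roots_multiset_prod_X_sub_C, roots_multiset_prod_X_sub_C]
  exact ⟨rfl, rfl⟩

end IsStdFact

theorem stdFact_generic_general (e : RatFunc ℂ)
    (hnum : e.num.Monic) (hden : e.denom.Monic)
    (h : ∀ a b : ℂ, e.num.IsRoot a → e.denom.IsRoot b → ¬ natDiff a b) :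
    IsStdFact e e.num.roots 0 e.denom.roots ∧
      ∀ (X : Multiset ℂ) (P : Multiset (ℂ × ℂ)) (W : Multiset ℂ),
        IsStdFact e X P W → P = 0 ∧ X = e.num.roots ∧ W = e.denom.roots := by
  refine ⟨⟨?_, by simp, by simp, by simp, ?_, by simp⟩, fun X P W hstd => ?_⟩
  · rw [stdProd_eq_div]
    simp only [Multiset.map_zero, add_zero, zero_add]
    rw [← (IsAlgClosed.splits _).eq_prod_roots_of_monic hnum,
      ← (IsAlgClosed.splits _).eq_prod_roots_of_monic hden, RatFunc.num_div_denom]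
  · exact fun x hx w hw => h x w (isRoot_of_mem_roots hx) (isRoot_of_mem_roots hw)
  obtain ⟨hroots_num, hroots_denom⟩ := hstd.roots_num_denom
  have hP : P = 0 := Multiset.eq_zero_of_forall_notMem fun p hp => by
    obtain ⟨n, -, hn⟩ := hstd.2.1 p hp
    refine h p.1 p.2 (isRoot_of_mem_roots ?_) (isRoot_of_mem_roots ?_) ⟨n, hn⟩
    · rw [hroots_num]; exact Multiset.mem_add.mpr (.inr (Multiset.mem_map_of_mem _ hp))
    · rw [hroots_denom]; exact Multiset.mem_add.mpr (.inl (Multiset.mem_map_of_mem _ hp))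
  subst hP
  simp only [Multiset.map_zero, add_zero, zero_add] at hroots_num hroots_denom
  exact ⟨rfl, hroots_num.symm, hroots_denom.symm⟩

/-- If `e ∈ 𝓡` has numerator `N` and denominator `D` (both monic) such that `b − a ∉ ℕ`
for every root `a` of `N` and every root `b` of `D`, then (roots of N, ∅, roots of D)
is a standard factorization of `e`, and it is the only one. -/
theorem stdFact_generic (e : RatFunc ℂ) (he : e ≠ 0)
    (hnum : e.num.Monic) (hden : e.denom.Monic)
    (h : ∀ a b : ℂ, e.num.IsRoot a → e.denom.IsRoot b → ¬ natDiff a b) :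
    IsStdFact e e.num.roots 0 e.denom.roots ∧
      ∀ (X : Multiset ℂ) (P : Multiset (ℂ × ℂ)) (W : Multiset ℂ),
        IsStdFact e X P W → P = 0 ∧ X = e.num.roots ∧ W = e.denom.roots :=
  stdFact_generic_general e hnum hden h
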